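/- arXiv:2008.10176 — 9 statements merged into one kernel-verified Lean document; each statement's English description precedes it below -/
import Mathlib

section
/- Let G be a finite set of finite sets, and let h : G → ℂ. Define for A ⊆ G the value H(A) = ∑_{x ∈ A} h(x), and define the matrix L indexed by G by L(x,y) = H({z ∈ G : z ⊆ x and z ⊆ y}). Then det(L) = ∏_{x ∈ G} h(x). -/
open Finset Matrix

section ZetaMatrix

variable {ι R : Type*} [Fintype ι] [PartialOrder ι] [DecidableLE ι] [DecidableEq ι]
  [CommRing R]

def zetaMatrix : Matrix ι ι R := of fun i j => if i ≤ j then 1 else 0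

/-- Listed along a linear extension of the order, the zeta matrix is unitriangular. -/
theorem det_zetaMatrix : (zetaMatrix : Matrix ι ι R).det = 1 := by
  let e : LinearExtension ι ≃ ι := Equiv.refl _
  let _ : Fintype (LinearExtension ι) := Fintype.ofEquiv ι e.symm
  have hupper : (zetaMatrix.submatrix e e : Matrix (LinearExtension ι) _ R).IsUpperTriangular := by
    intro i j hji
    have hnle : ¬ e i ≤ e j := fun hle => (toLinearExtension.monotone hle).not_gt hji
    simp only [submatrix_apply, zetaMatrix, of_apply, if_neg hnle]
  rw [← det_submatrix_equiv_self e, det_of_isUpperTriangular hupper]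
  simp [zetaMatrix]

theorem transpose_zetaMatrix_mul_diagonal_mul_zetaMatrix (h : ι → R) :
    zetaMatrixᵀ * diagonal h * zetaMatrix = of fun x y => ∑ z with z ≤ x ∧ z ≤ y, h z := by
  ext x y
  rw [mul_apply]
  simp only [mul_diagonal, transpose_apply, zetaMatrix, of_apply, sum_filter]
  refine sum_congr rfl fun z _ => ?_
  by_cases hzx : z ≤ x <;> by_cases hzy : z ≤ y <;> simp [hzx, hzy]

theorem det_sum_over_common_lowerBounds (h : ι → R) :
    (of fun x y => ∑ z with z ≤ x ∧ z ≤ y, h z).det = ∏ z, h z := by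
  rw [← transpose_zetaMatrix_mul_diagonal_mul_zetaMatrix, det_mul, det_mul, det_transpose,
    det_zetaMatrix, det_diagonal, one_mul, mul_one]

end ZetaMatrix

theorem stmt0 (G : Finset (Finset ℕ)) (h : Finset ℕ → ℂ) :
    Matrix.det (Matrix.of (fun x y : {x // x ∈ G} =>
      ∑ z ∈ G.filter (fun z => z ⊆ x.1 ∧ z ⊆ y.1), h z)) = ∏ x ∈ G, h x := by
  have hentry (x y : {x // x ∈ G}) : ∑ z ∈ G.filter (fun z => z ⊆ x.1 ∧ z ⊆ y.1), h z =
      ∑ z : {x // x ∈ G} with z ≤ x ∧ z ≤ y, h z := by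
    rw [sum_filter, sum_filter, ← sum_coe_sort G]
    rfl
  simp_rw [hentry]
  rw [det_sum_over_common_lowerBounds, prod_coe_sort G]
end

section
/- Let G be a finite set of finite sets and h : G → ℂ. Define g(x,y) = ω(x)·ω(y)·∑_{z ∈ G, x ⊆ z, y ⊆ z} h(z), where ω(x) = (-1)^(|x|-1). Then det(g) = ∏_{x ∈ G} h(x). -/
open Finset Matrix

theorem stmt1 (G : Finset (Finset ℕ)) (hne : ∀ x ∈ G, x.Nonempty)
    (h : Finset ℕ → ℂ) :
    Matrix.det (Matrix.of (fun x y : {x // x ∈ G} =>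
      (-1 : ℂ) ^ (x.1.card - 1) * (-1 : ℂ) ^ (y.1.card - 1) *
        ∑ z ∈ G.filter (fun z => x.1 ⊆ z ∧ y.1 ⊆ z), h z)) = ∏ x ∈ G, h x := by
  classical
  set ι := {x // x ∈ G} with hι
  let ω : ι → ℂ := fun x => (-1 : ℂ) ^ (x.1.card - 1)
  let Z : Matrix ι ι ℂ := Matrix.of (fun x z => if x.1 ⊆ z.1 then (1 : ℂ) else 0)
  let B : Matrix ι ι ℂ := Matrix.diagonal ω * Z
  have hB : ∀ x z : ι, B x z = ω x * (if x.1 ⊆ z.1 then (1 : ℂ) else 0) := by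
    intro x z
    simp [B, Matrix.diagonal_mul, Z]
  have hg : (Matrix.of fun x y : ι =>
      (-1 : ℂ) ^ (x.1.card - 1) * (-1 : ℂ) ^ (y.1.card - 1) *
        ∑ z ∈ G.filter (fun z => x.1 ⊆ z ∧ y.1 ⊆ z), h z)
      = B * Matrix.diagonal (fun z : ι => h z.1) * Bᵀ := by
    ext x y
    rw [Matrix.mul_apply]
    simp only [Matrix.mul_diagonal, Matrix.transpose_apply, hB, Matrix.of_apply]
    rw [Finset.sum_filter, ← Finset.sum_attach G
      (fun z => if x.1 ⊆ z ∧ y.1 ⊆ z then h z else 0)]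
    rw [Finset.mul_sum]
    apply Finset.sum_congr rfl
    intro z _
    by_cases h1 : x.1 ⊆ z.1 <;> by_cases h2 : y.1 ⊆ z.1 <;>
      simp [h1, h2] <;> ring
  rw [hg]
  letI : LinearOrder ι := LinearOrder.lift'
    (fun x : ι => toLex (x.1.card, ((Fintype.equivFin ι) x : ℕ)))
    (by
      intro a b hab
      have h2 := congrArg (fun p : ℕ ×ₗ ℕ => (ofLex p).2) hab
      simp only [ofLex_toLex] at h2
      exact (Fintype.equivFin ι).injective (Fin.ext h2))
  have hZ : Z.det = 1 := by
    rw [Matrix.det_of_upperTriangular]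
    · simp [Z]
    · intro i j hij
      simp only [Z, Matrix.of_apply, ite_eq_right_iff]
      intro hsub
      exfalso
      have hij' : (toLex (j.1.card, ((Fintype.equivFin ι) j : ℕ)))
          < toLex (i.1.card, ((Fintype.equivFin ι) i : ℕ)) := hij
      rcases eq_or_ne i j with rfl | hne'
      · exact absurd hij' (lt_irrefl _)
      · have hss : i.1 ⊂ j.1 := hsub.ssubset_of_ne (fun hc => hne' (Subtype.ext hc))
        have hcard : i.1.card < j.1.card := Finset.card_lt_card hss
        have : (toLex (i.1.card, ((Fintype.equivFin ι) i : ℕ)))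
            < toLex (j.1.card, ((Fintype.equivFin ι) j : ℕ)) := Prod.Lex.left _ _ hcard
        exact absurd (this.trans hij') (lt_irrefl _)
  rw [Matrix.det_mul, Matrix.det_mul, Matrix.det_transpose, Matrix.det_mul,
    Matrix.det_diagonal, Matrix.det_diagonal, hZ]
  have hω : (∏ x : ι, ω x) * (∏ x : ι, ω x) = 1 := by
    rw [← Finset.prod_mul_distrib]
    apply Finset.prod_eq_one
    intro x _
    simp [ω, ← mul_pow]
  have hprod : (∏ z : ι, h z.1) = ∏ x ∈ G, h x := Finset.prod_coe_sort G h
  rw [hprod]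
  linear_combination (∏ x ∈ G, h x) * hω
end

section
/- Let G be a finite abstract simplicial complex (a finite set of nonempty finite sets closed under taking nonempty subsets) and let h : G → ℂ satisfy |h(x)| = 1 for all x ∈ G. Define L(x,y) = ∑_{z ⊆ x, z ⊆ y, z ∈ G} h(z) and g(x,y) = ω(x)ω(y)∑_{z ⊇ x, z ⊇ y, z ∈ G} h(z) with ω(x) = (-1)^(|x|-1). Then (conj(g)) · L = I, i.e., g* is the inverse of L. -/
/-!
Let `Z x y = [x ⊆ y]` be the inclusion matrix of `G` and `Ω = diag ((-1) ^ |x|)`. Then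
`L = Zᵀ diag(h) Z` and, since simplices are nonempty, `conj g = Ω Z diag(conj h) Zᵀ Ω`.
A simplicial complex is order-convex, so the alternating sum over each Boolean interval
`[x, y]` gives the Möbius inversion identity `Z Ω Z = Ω`, and by transposition `Zᵀ Ω Zᵀ = Ω`.
Hence, as `conj h * h = |h|² = 1`,
`conj g * L = Ω Z conj(h) (Zᵀ Ω Zᵀ) h Z = Ω Z (conj(h) Ω h) Z = Ω (Z Ω Z) = Ω² = 1`.
-/

open Finset

/-- A finite abstract simplicial complex: a finite set of nonempty finite sets
closed under taking nonempty subsets. -/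
def IsSimplicialComplex (G : Finset (Finset ℕ)) : Prop :=
  (∀ x ∈ G, x.Nonempty) ∧ ∀ x ∈ G, ∀ y ⊆ x, y.Nonempty → y ∈ G

namespace Finset

theorem sum_coe_sort_boole_mul_mul_boole {β R : Type*} [NonAssocSemiring R] (G : Finset β)
    (p q : β → Prop) [DecidablePred p] [DecidablePred q] (f : β → R) :
    ∑ z : G, (if p z.1 then 1 else 0) * f z.1 * (if q z.1 then 1 else 0) =
      ∑ z ∈ G with p z ∧ q z, f z := by
  rw [sum_filter, ← sum_coe_sort G]
  exact sum_congr rfl fun z _ => by rw [boole_mul, mul_boole, ite_and]; split_ifs <;> rfl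

variable {α : Type*}

theorem Nonempty.neg_one_pow_card_sub_one {R : Type*} [Ring R] {s : Finset α}
    (hs : s.Nonempty) : (-1 : R) ^ (#s - 1) = -(-1) ^ #s := by
  rw [← pow_sub_one_mul hs.card_pos.ne' (-1 : R), mul_neg_one, neg_neg]

theorem sum_Icc_neg_one_pow_card [DecidableEq α] {R : Type*} [CommRing R] (s t : Finset α) :
    ∑ u ∈ Icc s t, (-1 : R) ^ #u = if s = t then (-1) ^ #s else 0 := by
  by_cases hst : s ⊆ t
  · have hdisj : ∀ v ∈ (t \ s).powerset, Disjoint s v := fun v hv =>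
      disjoint_sdiff.mono_right (mem_powerset.mp hv)
    have hinj : Set.InjOn (s ∪ ·) (t \ s).powerset := fun v hv w hw hvw => by
      rw [← union_sdiff_cancel_left (hdisj v hv), ← union_sdiff_cancel_left (hdisj w hw)]
      exact congrArg (· \ s) hvw
    have hsum : ∑ v ∈ (t \ s).powerset, (-1 : R) ^ #v = if s = t then 1 else 0 := by
      have hZ := congrArg (Int.cast : ℤ → R) (sum_powerset_neg_one_pow_card (x := t \ s))
      have hiff : t \ s = ∅ ↔ s = t := by
        rw [sdiff_eq_empty_iff_subset]
        exact ⟨subset_antisymm hst, fun h => h ▸ subset_rfl⟩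
      push_cast at hZ
      simpa only [hiff] using hZ
    rw [Icc_eq_image_powerset hst, sum_image hinj]
    calc ∑ v ∈ (t \ s).powerset, (-1 : R) ^ #(s ∪ v)
        = (-1) ^ #s * ∑ v ∈ (t \ s).powerset, (-1 : R) ^ #v := by
          rw [mul_sum]
          exact sum_congr rfl fun v hv => by rw [card_union_of_disjoint (hdisj v hv), pow_add]
      _ = if s = t then (-1) ^ #s else 0 := by rw [hsum, mul_ite, mul_one, mul_zero]
  · rw [Icc_eq_empty (by simpa using hst), sum_empty, if_neg (by rintro rfl; exact hst le_rfl)]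

end Finset

section InclusionMatrix

open Matrix

variable {α : Type*} [DecidableEq α] (G : Finset (Finset α)) (R : Type*) [CommRing R]

def inclusionMatrix : Matrix G G R := of fun x y => if x.1 ⊆ y.1 then 1 else 0

def signMatrix : Matrix G G R := diagonal fun x => (-1) ^ #x.1

theorem signMatrix_mul_signMatrix : signMatrix G R * signMatrix G R = 1 := by
  simp only [signMatrix, diagonal_mul_diagonal, ← mul_pow, neg_one_mul, neg_neg, one_pow,
    diagonal_one]

theorem signMatrix_mul_mul_signMatrix_apply (A : Matrix G G R) (x y : G) :
    (signMatrix G R * A * signMatrix G R) x y = (-1) ^ #x.1 * (-1) ^ #y.1 * A x y := by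
  rw [signMatrix, mul_diagonal, diagonal_mul, mul_right_comm]

variable {R}

theorem transpose_inclusionMatrix_mul_diagonal_mul_inclusionMatrix_apply
    (f : Finset α → R) (x y : G) :
    ((inclusionMatrix G R)ᵀ * diagonal (fun z : G => f z.1) * inclusionMatrix G R) x y =
      ∑ z ∈ G with z ⊆ x.1 ∧ z ⊆ y.1, f z := by
  rw [mul_apply]
  simp only [mul_diagonal, transpose_apply, inclusionMatrix, of_apply]
  exact sum_coe_sort_boole_mul_mul_boole G (· ⊆ x.1) (· ⊆ y.1) f

theorem inclusionMatrix_mul_diagonal_mul_transpose_apply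
    (f : Finset α → R) (x y : G) :
    (inclusionMatrix G R * diagonal (fun z : G => f z.1) * (inclusionMatrix G R)ᵀ) x y =
      ∑ z ∈ G with x.1 ⊆ z ∧ y.1 ⊆ z, f z := by
  rw [mul_apply]
  simp only [mul_diagonal, transpose_apply, inclusionMatrix, of_apply]
  exact sum_coe_sort_boole_mul_mul_boole G (x.1 ⊆ ·) (y.1 ⊆ ·) f

variable {G}

theorem inclusionMatrix_mul_signMatrix_mul_inclusionMatrix
    (hG : (G : Set (Finset α)).OrdConnected) :
    inclusionMatrix G R * signMatrix G R * inclusionMatrix G R = signMatrix G R := by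
  ext x y
  have hIcc : {u ∈ G | x.1 ⊆ u ∧ u ⊆ y.1} = Icc x.1 y.1 := by
    ext u
    simp only [mem_filter, mem_Icc, and_iff_right_iff_imp]
    exact fun hu => hG.out x.2 y.2 hu
  calc (inclusionMatrix G R * signMatrix G R * inclusionMatrix G R) x y
      = ∑ u ∈ G with x.1 ⊆ u ∧ u ⊆ y.1, (-1 : R) ^ #u := by
        rw [mul_apply]
        simp only [signMatrix, mul_diagonal, inclusionMatrix, of_apply]
        exact sum_coe_sort_boole_mul_mul_boole G (x.1 ⊆ ·) (· ⊆ y.1) fun u => (-1 : R) ^ #u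
    _ = signMatrix G R x y := by
        rw [hIcc, sum_Icc_neg_one_pow_card, signMatrix, diagonal_apply]
        exact if_congr Subtype.ext_iff.symm rfl rfl

theorem signMatrix_mul_inclusionMatrix_mul_diagonal_mul_eq_one
    (hG : (G : Set (Finset α)).OrdConnected) (d d' : G → R) (hd : ∀ x, d' x * d x = 1) :
    signMatrix G R * (inclusionMatrix G R * diagonal d' * (inclusionMatrix G R)ᵀ) *
        signMatrix G R * ((inclusionMatrix G R)ᵀ * diagonal d * inclusionMatrix G R) = 1 := by
  have hZ := inclusionMatrix_mul_signMatrix_mul_inclusionMatrix (R := R) hG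
  have hZT : (inclusionMatrix G R)ᵀ * signMatrix G R * (inclusionMatrix G R)ᵀ =
      signMatrix G R := by
    simpa only [transpose_mul, signMatrix, diagonal_transpose, Matrix.mul_assoc] using
      congrArg transpose hZ
  have hD : diagonal d' * signMatrix G R * diagonal d = signMatrix G R := by
    simp only [signMatrix, diagonal_mul_diagonal, mul_right_comm _ _ (d _), hd, one_mul]
  calc _ = signMatrix G R * inclusionMatrix G R *
        (diagonal d' * ((inclusionMatrix G R)ᵀ * signMatrix G R * (inclusionMatrix G R)ᵀ) *
          diagonal d) * inclusionMatrix G R := by simp only [Matrix.mul_assoc]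
    _ = signMatrix G R * (inclusionMatrix G R * signMatrix G R * inclusionMatrix G R) := by
        rw [hZT, hD]; simp only [Matrix.mul_assoc]
    _ = 1 := by rw [hZ, signMatrix_mul_signMatrix]

end InclusionMatrix

theorem IsSimplicialComplex.ordConnected {G : Finset (Finset ℕ)} (hG : IsSimplicialComplex G) :
    (G : Set (Finset ℕ)).OrdConnected :=
  ⟨fun x hx y hy u hu => hG.2 y hy u hu.2 ((hG.1 x hx).mono hu.1)⟩

open Matrix in
theorem stmt3 (G : Finset (Finset ℕ)) (hG : IsSimplicialComplex G)
    (h : Finset ℕ → ℂ) (hu : ∀ x ∈ G, ‖h x‖ = 1)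
    (L g : Matrix {x // x ∈ G} {x // x ∈ G} ℂ)
    (hL : L = Matrix.of (fun x y =>
      ∑ z ∈ G.filter (fun z => z ⊆ x.1 ∧ z ⊆ y.1), h z))
    (hg : g = Matrix.of (fun x y =>
      (-1 : ℂ) ^ (x.1.card - 1) * (-1 : ℂ) ^ (y.1.card - 1) *
        ∑ z ∈ G.filter (fun z => x.1 ⊆ z ∧ y.1 ⊆ z), h z)) :
    g.map (starRingEnd ℂ) * L = 1 := by
  have hL' : L = (inclusionMatrix G ℂ)ᵀ * diagonal (fun z : G => h z.1) * inclusionMatrix G ℂ := by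
    ext x y
    rw [hL, transpose_inclusionMatrix_mul_diagonal_mul_inclusionMatrix_apply, of_apply]
  have hg' : g.map (starRingEnd ℂ) = signMatrix G ℂ *
      (inclusionMatrix G ℂ * diagonal (fun z : G => starRingEnd ℂ (h z.1)) *
        (inclusionMatrix G ℂ)ᵀ) * signMatrix G ℂ := by
    ext x y
    rw [signMatrix_mul_mul_signMatrix_apply,
      inclusionMatrix_mul_diagonal_mul_transpose_apply G fun z => starRingEnd ℂ (h z), hg,
      map_apply, of_apply, (hG.1 _ x.2).neg_one_pow_card_sub_one,
      (hG.1 _ y.2).neg_one_pow_card_sub_one, neg_mul_neg]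
    simp only [map_mul, map_sum, map_pow, map_neg, map_one]
  rw [hL', hg']
  refine signMatrix_mul_inclusionMatrix_mul_diagonal_mul_eq_one hG.ordConnected _ _ fun z => ?_
  rw [Complex.conj_mul', hu z.1 z.2, Complex.ofReal_one, one_pow]
end

section
/- Let G be a finite abstract simplicial complex and h : G → ℂ with |h(x)| = 1 for all x ∈ G. For every x ∈ G, the diagonal entry of conj(g)·L at (x,x) equals |h(x)|² = 1; more precisely ∑_{y ∈ G} conj(g(x,y))·L(y,x) = |h(x)|². -/
/-!
Write `s y = (-1) ^ (|y| - 1)`. Expanding both matrix entries, the diagonal entry becomes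
`s x * ∑ z ⊇ x, ∑ w ⊆ x, conj (h z) * h w * ∑_{w ⊆ y ⊆ z} s y`.
Since `G` is closed under nonempty subsets, the innermost sum runs over the whole Boolean
interval `[w, z]`, where the alternating sum vanishes unless `w = z`. As `w ⊆ x ⊆ z`, only
`w = z = x` survives, leaving
`s x ^ 2 * conj (h x) * h x = |h x|²`.
-/

open Finset

theorem Finset.sum_Icc_neg_one_pow_card_s5 {α R : Type*} [DecidableEq α] [CommRing R]
    {s t : Finset α} (hst : s ⊆ t) :
    ∑ u ∈ Icc s t, (-1 : R) ^ #u = if s = t then (-1) ^ #t else 0 := by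
  have hdisj : ∀ a ∈ (t \ s).powerset, Disjoint s a := fun a ha =>
    disjoint_sdiff.mono_right (mem_powerset.mp ha)
  rw [Icc_eq_image_powerset hst, sum_image fun a ha b hb hab => by
    rw [← union_sdiff_cancel_left (hdisj a ha), hab, union_sdiff_cancel_left (hdisj b hb)]]
  rw [sum_congr rfl fun a ha => by rw [card_union_of_disjoint (hdisj a ha), pow_add],
    ← mul_sum]
  have := congrArg (Int.cast : ℤ → R) (sum_powerset_neg_one_pow_card (x := t \ s))
  push_cast at this
  rw [this]
  by_cases h : s = t
  · simp [h]
  · have hts : ¬t ⊆ s := fun hts => h (hst.antisymm hts)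
    simp [h, hts, sdiff_eq_empty_iff_subset]

theorem neg_one_pow_sub_one {R : Type*} [Ring R] {n : ℕ} (hn : n ≠ 0) :
    (-1 : R) ^ (n - 1) = -(-1) ^ n := by
  obtain ⟨m, rfl⟩ := Nat.exists_eq_succ_of_ne_zero hn
  simp [pow_succ]

namespace IsSimplicialComplex

variable {G : Finset (Finset ℕ)}

theorem filter_subset_subset_eq_Icc (hG : IsSimplicialComplex G) {w z : Finset ℕ}
    (hw : w.Nonempty) (hz : z ∈ G) :
    {y ∈ G | w ⊆ y ∧ y ⊆ z} = Icc w z := by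
  ext y
  rw [mem_filter, mem_Icc, and_iff_right_iff_imp]
  exact fun hy => hG.2 z hz y hy.2 (hw.mono hy.1)

theorem sum_filter_subset_subset_neg_one_pow (hG : IsSimplicialComplex G)
    {R : Type*} [CommRing R] {w z : Finset ℕ} (hw : w.Nonempty) (hz : z ∈ G) (hwz : w ⊆ z) :
    ∑ y ∈ G with w ⊆ y ∧ y ⊆ z, (-1 : R) ^ (#y - 1) =
      if w = z then (-1) ^ (#z - 1) else 0 := by
  rw [hG.filter_subset_subset_eq_Icc hw hz]
  have hne : ∀ y ∈ Icc w z, #y ≠ 0 := fun y hy =>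
    (card_pos.mpr (hw.mono (mem_Icc.mp hy).1)).ne'
  rw [sum_congr rfl fun y hy => neg_one_pow_sub_one (hne y hy), sum_neg_distrib,
    sum_Icc_neg_one_pow_card_s5 hwz]
  split_ifs with h
  · rw [neg_one_pow_sub_one (hne z (by simp [h]))]
  · exact neg_zero

theorem sum_neg_one_pow_mul_sum_mul_sum (hG : IsSimplicialComplex G) {R : Type*} [CommRing R]
    {x : Finset ℕ} (hx : x ∈ G) (a b : Finset ℕ → R) :
    ∑ y ∈ G, (-1 : R) ^ (#y - 1) * (∑ z ∈ G with x ⊆ z ∧ y ⊆ z, a z) *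
      (∑ w ∈ G with w ⊆ y ∧ w ⊆ x, b w) = (-1) ^ (#x - 1) * a x * b x := by
  calc (_ : R) = ∑ z ∈ G with x ⊆ z, ∑ w ∈ G with w ⊆ x,
        ∑ y ∈ G with w ⊆ y ∧ y ⊆ z, (-1 : R) ^ (#y - 1) * (a z * b w) := by
        simp only [mul_assoc, sum_mul_sum]
        simp only [mul_sum]
        rw [sum_comm' (t' := {z ∈ G | x ⊆ z}) (s' := fun z => {y ∈ G | y ⊆ z})
          fun y z => by simp only [mem_filter]; tauto]
        refine sum_congr rfl fun z _ => sum_comm' fun y w => by simp only [mem_filter]; tauto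
    _ = ∑ z ∈ G with x ⊆ z, ∑ w ∈ G with w ⊆ x,
        (if w = z then (-1) ^ (#z - 1) else 0) * (a z * b w) := by
        refine sum_congr rfl fun z hz => sum_congr rfl fun w hw => ?_
        rw [mem_filter] at hz hw
        rw [← sum_mul,
          hG.sum_filter_subset_subset_neg_one_pow (hG.1 w hw.1) hz.1 (hw.2.trans hz.2)]
    _ = _ := by
        have hx_up : x ∈ {z ∈ G | x ⊆ z} := mem_filter.mpr ⟨hx, subset_rfl⟩
        have hx_down : x ∈ {w ∈ G | w ⊆ x} := mem_filter.mpr ⟨hx, subset_rfl⟩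
        rw [sum_eq_single_of_mem x hx_up fun z hz hzx => ?_]
        · rw [sum_eq_single_of_mem x hx_down fun w _ hwx => by
            rw [if_neg hwx, zero_mul], if_pos rfl, mul_assoc]
        · refine sum_eq_zero fun w hw => ?_
          rw [if_neg fun (hwz : w = z) =>
            hzx ((mem_filter.mp hz).2.antisymm' (hwz ▸ (mem_filter.mp hw).2)), zero_mul]

end IsSimplicialComplex

theorem stmt5_general (G : Finset (Finset ℕ)) (hG : IsSimplicialComplex G)
    (h : Finset ℕ → ℂ)
    (L g : Matrix {x // x ∈ G} {x // x ∈ G} ℂ)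
    (hL : L = Matrix.of (fun x y =>
      ∑ z ∈ G.filter (fun z => z ⊆ x.1 ∧ z ⊆ y.1), h z))
    (hg : g = Matrix.of (fun x y =>
      (-1 : ℂ) ^ (x.1.card - 1) * (-1 : ℂ) ^ (y.1.card - 1) *
        ∑ z ∈ G.filter (fun z => x.1 ⊆ z ∧ y.1 ⊆ z), h z))
    (x : {x // x ∈ G}) :
    ∑ y : {x // x ∈ G}, (starRingEnd ℂ) (g x y) * L y x
      = ((‖h x.1‖) ^ 2 : ℂ) := by
  subst hL hg
  set s : ℂ := (-1) ^ (#x.1 - 1)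
  calc _ = s * ∑ y ∈ G, (-1) ^ (#y - 1) *
        (∑ z ∈ G with x.1 ⊆ z ∧ y ⊆ z, (starRingEnd ℂ) (h z)) *
        (∑ w ∈ G with w ⊆ y ∧ w ⊆ x.1, h w) := by
        rw [mul_sum, ← sum_coe_sort G]
        refine sum_congr rfl fun y _ => ?_
        simp only [Matrix.of_apply, map_mul, map_pow, map_neg, map_one, map_sum, s]
        ring
    _ = s ^ 2 * ((starRingEnd ℂ) (h x.1) * h x.1) := by
        rw [hG.sum_neg_one_pow_mul_sum_mul_sum x.2]
        ring
    _ = _ := by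
        rw [← pow_mul, mul_comm (#x.1 - 1), pow_mul, neg_one_sq, one_pow, one_mul,
          Complex.conj_mul']

theorem stmt5 (G : Finset (Finset ℕ)) (hG : IsSimplicialComplex G)
    (h : Finset ℕ → ℂ) (hu : ∀ x ∈ G, ‖h x‖ = 1)
    (L g : Matrix {x // x ∈ G} {x // x ∈ G} ℂ)
    (hL : L = Matrix.of (fun x y =>
      ∑ z ∈ G.filter (fun z => z ⊆ x.1 ∧ z ⊆ y.1), h z))
    (hg : g = Matrix.of (fun x y =>
      (-1 : ℂ) ^ (x.1.card - 1) * (-1 : ℂ) ^ (y.1.card - 1) *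
        ∑ z ∈ G.filter (fun z => x.1 ⊆ z ∧ y.1 ⊆ z), h z))
    (x : {x // x ∈ G}) :
    ∑ y : {x // x ∈ G}, (starRingEnd ℂ) (g x y) * L y x
      = ((‖h x.1‖) ^ 2 : ℂ) :=
  stmt5_general G hG h L g hL hg x
end

section
/- Let G be a finite abstract simplicial complex and h : G → ℂ arbitrary. Then the sum of all matrix entries of g equals H(G): ∑_{x,y ∈ G} g(x,y) = ∑_{x ∈ G} h(x). -/
open Finset

lemma key_omega_sum (G : Finset (Finset ℕ)) (hG : IsSimplicialComplex G) {z : Finset ℕ}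
    (hz : z ∈ G) : ∑ x ∈ G.filter (· ⊆ z), (-1 : ℂ) ^ (x.card - 1) = 1 := by
  have hset : G.filter (· ⊆ z) = z.powerset.filter (fun x => x.Nonempty) := by
    ext x
    simp only [mem_filter, mem_powerset]
    constructor
    · rintro ⟨hxG, hxz⟩; exact ⟨hxz, hG.1 x hxG⟩
    · rintro ⟨hxz, hxne⟩; exact ⟨hG.2 z hz x hxz hxne, hxz⟩
  rw [hset]
  have hzne : z.Nonempty := hG.1 z hz
  have h0 : ∑ x ∈ z.powerset, (-1 : ℂ) ^ x.card = 0 := by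
    exact_mod_cast congrArg (fun n : ℤ => (n : ℂ))
      (Finset.sum_powerset_neg_one_pow_card_of_nonempty hzne)
  have hsplit : z.powerset = insert ∅ (z.powerset.filter (fun x => x.Nonempty)) := by
    ext x
    simp only [mem_insert, mem_filter, mem_powerset, Finset.nonempty_iff_ne_empty]
    constructor
    · intro hx
      by_cases hxe : x = ∅
      · exact Or.inl hxe
      · exact Or.inr ⟨hx, hxe⟩
    · rintro (rfl | ⟨hx, _⟩)
      · exact empty_subset z
      · exact hx
  have hnotmem : (∅ : Finset ℕ) ∉ z.powerset.filter (fun x => x.Nonempty) := by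
    simp
  have h1 : ∑ x ∈ z.powerset.filter (fun x => x.Nonempty), (-1 : ℂ) ^ x.card = -1 := by
    have h0' := h0
    rw [hsplit, Finset.sum_insert hnotmem] at h0'
    simp only [card_empty, pow_zero] at h0'
    linear_combination h0'
  have h2 : ∀ x ∈ z.powerset.filter (fun x => x.Nonempty),
      (-1 : ℂ) ^ (x.card - 1) = -(-1 : ℂ) ^ x.card := by
    intro x hx
    have hxne : x.Nonempty := (mem_filter.mp hx).2
    have hc : x.card - 1 + 1 = x.card := Nat.succ_pred_eq_of_pos (card_pos.mpr hxne)
    have hp : (-1 : ℂ) ^ x.card = (-1 : ℂ) ^ (x.card - 1) * (-1) := by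
      rw [← pow_succ, hc]
    linear_combination hp
  rw [Finset.sum_congr rfl h2, Finset.sum_neg_distrib, h1]
  ring

theorem stmt6 (G : Finset (Finset ℕ)) (hG : IsSimplicialComplex G)
    (h : Finset ℕ → ℂ) :
    ∑ x ∈ G, ∑ y ∈ G,
      ((-1 : ℂ) ^ (x.card - 1) * (-1 : ℂ) ^ (y.card - 1) *
        ∑ z ∈ G.filter (fun z => x ⊆ z ∧ y ⊆ z), h z)
      = ∑ x ∈ G, h x := by
  have key' : ∀ z ∈ G, ∑ x ∈ G, (if x ⊆ z then (-1 : ℂ) ^ (x.card - 1) else 0) = 1 := by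
    intro z hz
    rw [← Finset.sum_filter]
    exact key_omega_sum G hG hz
  have step1 : ∀ x y : Finset ℕ,
      ((-1 : ℂ) ^ (x.card - 1) * (-1 : ℂ) ^ (y.card - 1) *
        ∑ z ∈ G.filter (fun z => x ⊆ z ∧ y ⊆ z), h z)
      = ∑ z ∈ G, (if x ⊆ z then (-1 : ℂ) ^ (x.card - 1) else 0) *
          ((if y ⊆ z then (-1 : ℂ) ^ (y.card - 1) else 0) * h z) := by
    intro x y
    rw [Finset.sum_filter, Finset.mul_sum]
    apply Finset.sum_congr rfl
    intro z hz
    by_cases h1 : x ⊆ z <;> by_cases h2 : y ⊆ z <;> simp [h1, h2]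
    ring
  calc ∑ x ∈ G, ∑ y ∈ G,
      ((-1 : ℂ) ^ (x.card - 1) * (-1 : ℂ) ^ (y.card - 1) *
        ∑ z ∈ G.filter (fun z => x ⊆ z ∧ y ⊆ z), h z)
      = ∑ x ∈ G, ∑ y ∈ G, ∑ z ∈ G, (if x ⊆ z then (-1 : ℂ) ^ (x.card - 1) else 0) *
          ((if y ⊆ z then (-1 : ℂ) ^ (y.card - 1) else 0) * h z) := by
        exact Finset.sum_congr rfl fun x _ => Finset.sum_congr rfl fun y _ => step1 x y
    _ = ∑ z ∈ G, ∑ x ∈ G, ∑ y ∈ G, (if x ⊆ z then (-1 : ℂ) ^ (x.card - 1) else 0) *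
          ((if y ⊆ z then (-1 : ℂ) ^ (y.card - 1) else 0) * h z) := by
        have hinner : (∑ x ∈ G, ∑ y ∈ G, ∑ z ∈ G,
            (if x ⊆ z then (-1 : ℂ) ^ (x.card - 1) else 0) *
              ((if y ⊆ z then (-1 : ℂ) ^ (y.card - 1) else 0) * h z))
            = ∑ x ∈ G, ∑ z ∈ G, ∑ y ∈ G,
            (if x ⊆ z then (-1 : ℂ) ^ (x.card - 1) else 0) *
              ((if y ⊆ z then (-1 : ℂ) ^ (y.card - 1) else 0) * h z) :=
          Finset.sum_congr rfl fun _ _ => Finset.sum_comm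
        rw [hinner, Finset.sum_comm]
    _ = ∑ z ∈ G, (∑ x ∈ G, (if x ⊆ z then (-1 : ℂ) ^ (x.card - 1) else 0)) *
          ((∑ y ∈ G, (if y ⊆ z then (-1 : ℂ) ^ (y.card - 1) else 0)) * h z) := by
        apply Finset.sum_congr rfl
        intro z _
        rw [Finset.sum_mul]
        apply Finset.sum_congr rfl
        intro x _
        rw [Finset.sum_mul, Finset.mul_sum]
    _ = ∑ x ∈ G, h x := by
        apply Finset.sum_congr rfl
        intro z hz
        rw [key' z hz]
        ring
end

section
/- Let G be a finite abstract simplicial complex and h : G → ℂ. For each x ∈ G, the potential V(x) = ∑_{y ∈ G} g(x,y) equals the 'curvature' ω(x)·g(x,x), i.e., ∑_{y ∈ G} g(x,y) = ω(x) g(x,x). -/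
open Finset

noncomputable def gEnt (G : Finset (Finset ℕ)) (h : Finset ℕ → ℂ) (x y : Finset ℕ) : ℂ :=
  (-1 : ℂ) ^ (x.card - 1) * (-1 : ℂ) ^ (y.card - 1) *
    ∑ z ∈ G.filter (fun z => x ⊆ z ∧ y ⊆ z), h z

lemma sum_omega_powerset (z : Finset ℕ) (hz : z.Nonempty) :
    ∑ y ∈ z.powerset.filter Finset.Nonempty, (-1 : ℂ) ^ (y.card - 1) = 1 := by
  have h0 : ∑ y ∈ z.powerset, (-1 : ℂ) ^ y.card = 0 := by
    have hz2 := Finset.sum_powerset_neg_one_pow_card_of_nonempty hz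
    exact_mod_cast congrArg (fun n : ℤ => (n : ℂ)) hz2
  have hsplit := Finset.sum_filter_add_sum_filter_not z.powerset Finset.Nonempty
      (fun y => (-1 : ℂ) ^ y.card)
  have hne : z.powerset.filter (fun y => ¬ y.Nonempty) = {∅} := by
    ext y
    simp [Finset.not_nonempty_iff_eq_empty]
    rintro rfl; exact Finset.empty_subset z
  rw [hne, h0, Finset.sum_singleton] at hsplit
  simp only [Finset.card_empty, pow_zero] at hsplit
  have hneg : ∑ y ∈ z.powerset.filter Finset.Nonempty, (-1 : ℂ) ^ y.card
      = - ∑ y ∈ z.powerset.filter Finset.Nonempty, (-1 : ℂ) ^ (y.card - 1) := by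
    rw [← Finset.sum_neg_distrib]
    apply Finset.sum_congr rfl
    intro y hy
    have hyne : y.Nonempty := (Finset.mem_filter.mp hy).2
    have : y.card - 1 + 1 = y.card := Nat.succ_pred_eq_of_pos (Finset.card_pos.mpr hyne)
    conv_lhs => rw [← this]
    rw [pow_succ]
    ring
  rw [hneg] at hsplit
  linear_combination -hsplit

theorem stmt7 (G : Finset (Finset ℕ)) (hG : IsSimplicialComplex G)
    (h : Finset ℕ → ℂ) (x : Finset ℕ) (hx : x ∈ G) :
    ∑ y ∈ G, gEnt G h x y = (-1 : ℂ) ^ (x.card - 1) * gEnt G h x x := by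
  obtain ⟨hGne, hGsub⟩ := hG
  have key : ∀ z ∈ G, ∑ y ∈ G.filter (fun y => y ⊆ z), (-1 : ℂ) ^ (y.card - 1) = 1 := by
    intro z hz
    have : G.filter (fun y => y ⊆ z) = z.powerset.filter Finset.Nonempty := by
      ext y
      simp only [Finset.mem_filter, Finset.mem_powerset]
      constructor
      · rintro ⟨hyG, hyz⟩; exact ⟨hyz, hGne y hyG⟩
      · rintro ⟨hyz, hyne⟩; exact ⟨hGsub z hz y hyz hyne, hyz⟩
    rw [this]
    exact sum_omega_powerset z (hGne z hz)
  calc ∑ y ∈ G, gEnt G h x y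
      = ∑ y ∈ G, ∑ z ∈ G.filter (fun z => x ⊆ z),
          (if y ⊆ z then (-1 : ℂ) ^ (x.card - 1) * (-1 : ℂ) ^ (y.card - 1) * h z else 0) := by
        apply Finset.sum_congr rfl
        intro y _
        rw [gEnt, Finset.mul_sum, ← Finset.sum_filter, Finset.filter_filter]
    _ = ∑ z ∈ G.filter (fun z => x ⊆ z), ∑ y ∈ G,
          (if y ⊆ z then (-1 : ℂ) ^ (x.card - 1) * (-1 : ℂ) ^ (y.card - 1) * h z else 0) :=
        Finset.sum_comm
    _ = ∑ z ∈ G.filter (fun z => x ⊆ z),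
          (-1 : ℂ) ^ (x.card - 1) * h z *
            ∑ y ∈ G.filter (fun y => y ⊆ z), (-1 : ℂ) ^ (y.card - 1) := by
        apply Finset.sum_congr rfl
        intro z _
        rw [← Finset.sum_filter, Finset.mul_sum]
        apply Finset.sum_congr rfl
        intro y _; ring
    _ = ∑ z ∈ G.filter (fun z => x ⊆ z), (-1 : ℂ) ^ (x.card - 1) * h z := by
        apply Finset.sum_congr rfl
        intro z hz
        rw [key z (Finset.mem_filter.mp hz).1, mul_one]
    _ = (-1 : ℂ) ^ (x.card - 1) * gEnt G h x x := by
        rw [gEnt]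
        rw [← Finset.mul_sum]
        have heq : (G.filter fun z => x ⊆ z ∧ x ⊆ z) = G.filter fun z => x ⊆ z :=
          Finset.filter_congr (fun z _ => by tauto)
        rw [heq]
        have h2 : ((-1 : ℂ) ^ (x.card - 1)) * ((-1 : ℂ) ^ (x.card - 1)) = 1 := by
          rw [← pow_add, ← two_mul, pow_mul]; norm_num
        rw [h2, one_mul]
end

section
/- Let G be a finite abstract simplicial complex and h : G → ℂ. Then the super trace of g equals the total energy: ∑_{x ∈ G} ω(x) g(x,x) = ∑_{x ∈ G} h(x). -/
open Finset

theorem stmt8 (G : Finset (Finset ℕ)) (hG : IsSimplicialComplex G)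
    (h : Finset ℕ → ℂ) :
    ∑ x ∈ G, (-1 : ℂ) ^ (x.card - 1) * gEnt G h x x = ∑ x ∈ G, h x := by
  classical
  have key : ∀ z ∈ G,
      (∑ x ∈ G.filter (fun x => x ⊆ z), (-1:ℂ)^(x.card-1)) = 1 := by
    intro z hz
    have hfilter : G.filter (fun x => x ⊆ z)
        = z.powerset.filter (fun x => x.Nonempty) := by
      ext x
      simp only [Finset.mem_filter, Finset.mem_powerset]
      constructor
      · rintro ⟨hxG, hxz⟩; exact ⟨hxz, hG.1 x hxG⟩
      · rintro ⟨hxz, hne⟩; exact ⟨hG.2 z hz x hxz hne, hxz⟩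
    rw [hfilter]
    have h1 : ∀ x ∈ z.powerset.filter (fun x => x.Nonempty),
        (-1:ℂ)^(x.card-1) = -((-1:ℂ)^x.card) := by
      intro x hx
      simp only [Finset.mem_filter] at hx
      have hc : 1 ≤ x.card := Finset.card_pos.mpr hx.2
      have hx' : x.card = (x.card - 1) + 1 := by omega
      rw [hx', pow_succ]
      ring_nf
      congr 1
      omega
    rw [Finset.sum_congr rfl h1, Finset.sum_neg_distrib]
    have hsplit : (∑ x ∈ z.powerset, (-1:ℂ)^x.card)
        = (∑ x ∈ z.powerset.filter (fun x => x.Nonempty), (-1:ℂ)^x.card) + 1 := by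
      rw [← Finset.sum_filter_add_sum_filter_not z.powerset (fun x => x.Nonempty)]
      congr 1
      have he : z.powerset.filter (fun x => ¬ x.Nonempty) = {∅} := by
        ext x
        simp [Finset.not_nonempty_iff_eq_empty]
        rintro rfl; exact Finset.empty_subset z
      rw [he]; simp
    have hzero : (∑ x ∈ z.powerset, (-1:ℂ)^x.card) = 0 := by
      have hz0 := Finset.sum_powerset_neg_one_pow_card_of_nonempty (hG.1 z hz)
      calc (∑ x ∈ z.powerset, (-1:ℂ)^x.card)
          = ((∑ x ∈ z.powerset, (-1:ℤ)^x.card : ℤ) : ℂ) := by push_cast; rfl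
        _ = 0 := by rw [hz0]; norm_num
    rw [hzero] at hsplit
    linear_combination hsplit
  have step : ∀ x ∈ G, (-1 : ℂ) ^ (x.card - 1) * gEnt G h x x
      = ∑ z ∈ G, if x ⊆ z then (-1:ℂ)^(x.card-1) * h z else 0 := by
    intro x hx
    rw [gEnt]
    have hsq : (-1:ℂ)^(x.card-1) * (-1:ℂ)^(x.card-1) = 1 := by
      rw [← pow_add, ← two_mul, pow_mul]; norm_num
    have : (-1 : ℂ) ^ (x.card - 1) *
        ((-1 : ℂ) ^ (x.card - 1) * (-1 : ℂ) ^ (x.card - 1) *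
          ∑ z ∈ G.filter (fun z => x ⊆ z ∧ x ⊆ z), h z)
        = (-1 : ℂ) ^ (x.card - 1) * ∑ z ∈ G.filter (fun z => x ⊆ z), h z := by
      rw [hsq]; simp [and_self]
    rw [this, Finset.sum_filter, Finset.mul_sum]
    simp [mul_ite]
  rw [Finset.sum_congr rfl step, Finset.sum_comm]
  apply Finset.sum_congr rfl
  intro z hz
  have : (∑ x ∈ G, if x ⊆ z then (-1:ℂ)^(x.card-1) * h z else 0)
      = (∑ x ∈ G.filter (fun x => x ⊆ z), (-1:ℂ)^(x.card-1)) * h z := by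
    rw [Finset.sum_filter, Finset.sum_mul]
    simp [ite_mul]
  rw [this, key z hz, one_mul]
end

section
/- Let G be a finite abstract simplicial complex and h : G → ℂ. For x, y ∈ G with neither x ⊆ y nor y ⊆ x, the entry (conj(g)·L)(x,y) = 0. -/
open Finset

lemma key_sum (G : Finset (Finset ℕ)) (hG : IsSimplicialComplex G)
    (z u : Finset ℕ) (hz : z ∈ G) (hu : u.Nonempty) (huz : u ⊆ z) (hne : u ≠ z) :
    ∑ w ∈ G.filter (fun w => u ⊆ w ∧ w ⊆ z), (-1 : ℂ) ^ (w.card - 1) = 0 := by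
  have hset : G.filter (fun w => u ⊆ w ∧ w ⊆ z)
      = (z.powerset).filter (fun w => u ⊆ w) := by
    ext w
    simp only [Finset.mem_filter, Finset.mem_powerset]
    constructor
    · rintro ⟨_, h1, h2⟩; exact ⟨h2, h1⟩
    · rintro ⟨h2, h1⟩; exact ⟨hG.2 z hz w h2 (hu.mono h1), h1, h2⟩
  rw [hset]
  have hbij : ∑ w ∈ (z.powerset).filter (fun w => u ⊆ w), (-1 : ℂ) ^ (w.card - 1)
      = ∑ t ∈ (z \ u).powerset, (-1 : ℂ) ^ ((u ∪ t).card - 1) := by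
    refine Finset.sum_bij' (fun w _ => w \ u) (fun t _ => u ∪ t) ?_ ?_ ?_ ?_ ?_
    · intro w hw
      simp only [Finset.mem_filter, Finset.mem_powerset] at hw ⊢
      exact sdiff_subset_sdiff hw.1 (le_refl u)
    · intro t ht
      simp only [Finset.mem_powerset] at ht ⊢
      simp only [Finset.mem_filter, Finset.mem_powerset]
      exact ⟨Finset.union_subset huz (ht.trans (Finset.sdiff_subset)), Finset.subset_union_left⟩
    · intro w hw
      simp only [Finset.mem_filter, Finset.mem_powerset] at hw
      show u ∪ w \ u = w
      exact Finset.union_sdiff_of_subset hw.2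
    · intro t ht
      simp only [Finset.mem_powerset] at ht
      have hd : Disjoint u t := Finset.disjoint_of_subset_right ht Finset.disjoint_sdiff
      show (u ∪ t) \ u = t
      exact Finset.union_sdiff_cancel_left hd
    · intro w hw
      simp only [Finset.mem_filter, Finset.mem_powerset] at hw
      rw [Finset.union_sdiff_of_subset hw.2]
  rw [hbij]
  have hcard : ∀ t ∈ (z \ u).powerset, (u ∪ t).card - 1 = (u.card - 1) + t.card := by
    intro t ht
    simp only [Finset.mem_powerset] at ht
    have hd : Disjoint u t := Finset.disjoint_of_subset_right ht Finset.disjoint_sdiff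
    have h1 : 1 ≤ u.card := Finset.card_pos.mpr hu
    rw [Finset.card_union_of_disjoint hd]
    omega
  rw [Finset.sum_congr rfl (fun t ht => by rw [hcard t ht, pow_add])]
  rw [← Finset.mul_sum]
  have hne' : (z \ u).Nonempty := by
    rw [Finset.sdiff_nonempty]
    intro hcon
    exact hne (Finset.Subset.antisymm huz hcon)
  have : ∑ t ∈ (z \ u).powerset, (-1 : ℂ) ^ t.card = 0 := by
    have := Finset.sum_powerset_neg_one_pow_card_of_nonempty hne'
    have h2 : ((∑ m ∈ (z \ u).powerset, (-1 : ℤ) ^ m.card : ℤ) : ℂ)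
        = ∑ t ∈ (z \ u).powerset, (-1 : ℂ) ^ t.card := by push_cast; ring_nf
    rw [← h2, this]; simp
  rw [this, mul_zero]

theorem stmt11 (G : Finset (Finset ℕ)) (hG : IsSimplicialComplex G)
    (h : Finset ℕ → ℂ)
    (L g : Matrix {x // x ∈ G} {x // x ∈ G} ℂ)
    (hL : L = Matrix.of (fun x y =>
      ∑ z ∈ G.filter (fun z => z ⊆ x.1 ∧ z ⊆ y.1), h z))
    (hg : g = Matrix.of (fun x y =>
      (-1 : ℂ) ^ (x.1.card - 1) * (-1 : ℂ) ^ (y.1.card - 1) *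
        ∑ z ∈ G.filter (fun z => x.1 ⊆ z ∧ y.1 ⊆ z), h z))
    (x y : {x // x ∈ G}) (hxy : ¬ x.1 ⊆ y.1) (hyx : ¬ y.1 ⊆ x.1) :
    (g.map (starRingEnd ℂ) * L) x y = 0 := by
  subst hL hg
  rw [Matrix.mul_apply]
  simp only [Matrix.map_apply, Matrix.of_apply, map_mul, map_pow, map_neg, map_one, map_sum]
  -- convert sum over subtype to sum over G
  rw [Finset.sum_coe_sort G (fun w =>
    ((-1 : ℂ) ^ (x.1.card - 1) * (-1 : ℂ) ^ (w.card - 1) *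
        ∑ z ∈ G.filter (fun z => x.1 ⊆ z ∧ w ⊆ z), (starRingEnd ℂ) (h z)) *
      ∑ z ∈ G.filter (fun z => z ⊆ w ∧ z ⊆ y.1), h z)]
  -- expand everything to triple sums with indicators
  have expand : ∀ w ∈ G,
      ((-1 : ℂ) ^ (x.1.card - 1) * (-1 : ℂ) ^ (w.card - 1) *
        ∑ z ∈ G.filter (fun z => x.1 ⊆ z ∧ w ⊆ z), (starRingEnd ℂ) (h z)) *
      (∑ u ∈ G.filter (fun u => u ⊆ w ∧ u ⊆ y.1), h u)
      = ∑ z ∈ G, ∑ u ∈ G,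
          (if x.1 ⊆ z ∧ w ⊆ z then (1:ℂ) else 0) * (if u ⊆ w ∧ u ⊆ y.1 then (1:ℂ) else 0) *
          ((-1 : ℂ) ^ (x.1.card - 1) * (-1 : ℂ) ^ (w.card - 1) *
            (starRingEnd ℂ) (h z) * h u) := by
    intro w hw
    rw [Finset.sum_filter, Finset.sum_filter, mul_assoc, Finset.sum_mul_sum, Finset.mul_sum]
    refine Finset.sum_congr rfl fun z hz => ?_
    rw [Finset.mul_sum]
    refine Finset.sum_congr rfl fun u hu => ?_
    by_cases h1 : x.1 ⊆ z ∧ w ⊆ z <;> by_cases h2 : u ⊆ w ∧ u ⊆ y.1 <;>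
      simp [h1, h2] <;> ring
  rw [Finset.sum_congr rfl expand]
  rw [Finset.sum_comm]
  have swap2 : ∀ z ∈ G, ∑ w ∈ G, ∑ u ∈ G,
      (if x.1 ⊆ z ∧ w ⊆ z then (1:ℂ) else 0) * (if u ⊆ w ∧ u ⊆ y.1 then (1:ℂ) else 0) *
        ((-1 : ℂ) ^ (x.1.card - 1) * (-1 : ℂ) ^ (w.card - 1) *
          (starRingEnd ℂ) (h z) * h u)
      = ∑ u ∈ G, ∑ w ∈ G,
      (if x.1 ⊆ z ∧ w ⊆ z then (1:ℂ) else 0) * (if u ⊆ w ∧ u ⊆ y.1 then (1:ℂ) else 0) *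
        ((-1 : ℂ) ^ (x.1.card - 1) * (-1 : ℂ) ^ (w.card - 1) *
          (starRingEnd ℂ) (h z) * h u) := fun z _ => Finset.sum_comm
  rw [Finset.sum_congr rfl swap2]
  refine Finset.sum_eq_zero fun z hz => Finset.sum_eq_zero fun u hu => ?_
  by_cases hxz : x.1 ⊆ z
  · by_cases huy : u ⊆ y.1
    · -- inner sum over w is key_sum
      have inner : ∑ w ∈ G,
          (if x.1 ⊆ z ∧ w ⊆ z then (1:ℂ) else 0) * (if u ⊆ w ∧ u ⊆ y.1 then (1:ℂ) else 0) *
            ((-1 : ℂ) ^ (x.1.card - 1) * (-1 : ℂ) ^ (w.card - 1) *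
              (starRingEnd ℂ) (h z) * h u)
          = ((-1 : ℂ) ^ (x.1.card - 1) * (starRingEnd ℂ) (h z) * h u) *
            ∑ w ∈ G.filter (fun w => u ⊆ w ∧ w ⊆ z), (-1 : ℂ) ^ (w.card - 1) := by
        rw [Finset.mul_sum, Finset.sum_filter]
        refine Finset.sum_congr rfl fun w hw => ?_
        by_cases hc : u ⊆ w ∧ w ⊆ z
        · simp [hc.1, hc.2, hxz, huy]; ring
        · rcases Classical.em (w ⊆ z) with h1 | h1 <;>
            rcases Classical.em (u ⊆ w) with h2 | h2 <;>
            simp [h1, h2, hxz, huy] at hc ⊢ <;> tauto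
      rw [inner]
      have hune : u ≠ z := by
        rintro rfl
        exact hxy (hxz.trans huy)
      by_cases huz : u ⊆ z
      · rw [key_sum G hG z u hz (hG.1 u hu) huz hune, mul_zero]
      · have : G.filter (fun w => u ⊆ w ∧ w ⊆ z) = ∅ := by
          rw [Finset.filter_eq_empty_iff]
          rintro w _ ⟨h1, h2⟩
          exact huz (h1.trans h2)
        rw [this, Finset.sum_empty, mul_zero]
    · refine Finset.sum_eq_zero fun w hw => ?_
      simp [huy]
  · refine Finset.sum_eq_zero fun w hw => ?_
    simp [hxz]
end

section
/- Let G be a finite abstract simplicial complex and h : G → ℂ with |h(x)| = 1 for all x. Then every eigenvalue of the connection matrix L is nonzero, i.e., L is invertible, and |det L| = 1. -/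
/-! `L` factors as `ζᵀ · diag h · ζ`, where `ζ x y = [x ⊆ y]` is the zeta matrix of the face
poset. Along any linear extension of inclusion, `ζ` is unitriangular, so `det L = ∏ x, h x`,
which has norm `1`. -/

open Finset

namespace Matrix

variable {ι R : Type*}

theorem det_eq_prod_diag_of_apply_eq_zero_of_not_le [Fintype ι] [DecidableEq ι] [PartialOrder ι]
    [CommRing R] (M : Matrix ι ι R) (hM : ∀ i j, ¬i ≤ j → M i j = 0) :
    M.det = ∏ i, M i i := by
  have hb : M.BlockTriangular toLinearExtension := fun i j hji =>
    hM i j fun hij => (toLinearExtension.monotone hij).not_gt hji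
  rw [hb.det, prod_image (g := ⇑toLinearExtension) fun i _ j _ hij => hij]
  -- `toLinearExtension` is the identity map, so every block is the `1 × 1` block at `i`.
  exact prod_congr rfl fun i _ => by rw [← det_toSquareBlock_id M i]; congr!

variable (ι R) in
def zetaMatrix [LE ι] [DecidableLE ι] [Zero R] [One R] : Matrix ι ι R :=
  of fun i j => if i ≤ j then 1 else 0

def connectionMatrix [Fintype ι] [LE ι] [DecidableLE ι] [AddCommMonoid R] (h : ι → R) :
    Matrix ι ι R :=
  of fun x y => ∑ z with z ≤ x ∧ z ≤ y, h z

theorem connectionMatrix_eq_zetaMatrix_transpose_mul [Fintype ι] [DecidableEq ι] [LE ι]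
    [DecidableLE ι] [NonAssocSemiring R] (h : ι → R) :
    connectionMatrix h = (zetaMatrix ι R)ᵀ * diagonal h * zetaMatrix ι R := by
  ext x y
  simp only [connectionMatrix, zetaMatrix, of_apply, mul_apply, transpose_apply, diagonal_apply,
    mul_ite, mul_one, mul_zero, ite_mul, zero_mul, sum_ite_eq', mem_univ, if_true]
  rw [sum_filter]
  exact sum_congr rfl fun z _ => by split_ifs <;> simp_all

section PartialOrder

variable [Fintype ι] [DecidableEq ι] [PartialOrder ι] [DecidableLE ι] [CommRing R]

theorem det_zetaMatrix : (zetaMatrix ι R).det = 1 := by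
  rw [det_eq_prod_diag_of_apply_eq_zero_of_not_le (zetaMatrix ι R) fun i j hij => if_neg hij]
  exact prod_eq_one fun i _ => if_pos le_rfl

theorem det_connectionMatrix (h : ι → R) : (connectionMatrix h).det = ∏ x, h x := by
  rw [connectionMatrix_eq_zetaMatrix_transpose_mul, det_mul, det_mul, det_transpose,
    det_zetaMatrix, det_diagonal, one_mul, mul_one]

end PartialOrder

end Matrix

open Matrix in
theorem stmt19_general (G : Finset (Finset ℕ))
    (h : Finset ℕ → ℂ) (hu : ∀ x ∈ G, ‖h x‖ = 1)
    (L : Matrix {x // x ∈ G} {x // x ∈ G} ℂ)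
    (hL : L = Matrix.of (fun x y =>
      ∑ z ∈ G.filter (fun z => z ⊆ x.1 ∧ z ⊆ y.1), h z)) :
    IsUnit L ∧ ‖L.det‖ = 1 := by
  have hLG : L = connectionMatrix fun x : G => h x := by
    ext x y
    rw [hL, connectionMatrix, of_apply, of_apply, sum_filter, sum_filter, ← sum_coe_sort G]
    rfl
  have hdet : ‖L.det‖ = 1 := by
    rw [hLG, det_connectionMatrix, norm_prod]
    exact prod_eq_one fun x _ => hu x x.2
  refine ⟨?_, hdet⟩
  rw [isUnit_iff_isUnit_det, isUnit_iff_ne_zero, ← norm_ne_zero_iff, hdet]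
  exact one_ne_zero

theorem stmt19 (G : Finset (Finset ℕ)) (hG : IsSimplicialComplex G)
    (h : Finset ℕ → ℂ) (hu : ∀ x ∈ G, ‖h x‖ = 1)
    (L : Matrix {x // x ∈ G} {x // x ∈ G} ℂ)
    (hL : L = Matrix.of (fun x y =>
      ∑ z ∈ G.filter (fun z => z ⊆ x.1 ∧ z ⊆ y.1), h z)) :
    IsUnit L ∧ ‖L.det‖ = 1 :=
  stmt19_general G h hu L hL
end
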